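/- arXiv:2411.00013 — 3 statements merged into one kernel-verified Lean document; each statement's English description precedes it below -/
import Mathlib

section
/- For all integers n ≥ 1, the overcubic partition triples function satisfies bt(n) ≡ 0 (mod 2). -/
open PowerSeries

/-- Truncated version of `fₖ = ∏_{i≥1} (1 - q^{k i})`: the product over `1 ≤ i ≤ N`,
which has the same coefficients as the infinite product in degrees `≤ N`. -/
noncomputable def fTrunc (k N : ℕ) : PowerSeries ℤ :=
  ∏ i ∈ Finset.Icc 1 N, (1 - (PowerSeries.X : PowerSeries ℤ) ^ (k * i))

/-- `bt n` is the `n`-th coefficient of `f₄³ / (f₁⁶ f₂³)`, the number of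
overcubic partition triples of `n`. -/
noncomputable def bt (n : ℕ) : ℤ :=
  PowerSeries.coeff n
    ((fTrunc 4 n) ^ 3 * PowerSeries.invOfUnit ((fTrunc 1 n) ^ 6 * (fTrunc 2 n) ^ 3) 1)

/-! Modulo 2 the Frobenius gives `f₁² ≡ f₂` and `f₂² ≡ f₄`, so the denominator `f₁⁶ f₂³` is
congruent to the numerator `f₄³` and the generating function of `bt` is `≡ 1 (mod 2)`. -/

lemma constantCoeff_fTrunc {k : ℕ} (hk : k ≠ 0) (N : ℕ) : constantCoeff (fTrunc k N) = 1 := by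
  rw [fTrunc, map_prod]
  refine Finset.prod_eq_one fun i hi ↦ ?_
  have : k * i ≠ 0 := mul_ne_zero hk (Nat.one_le_iff_ne_zero.mp (Finset.mem_Icc.mp hi).1)
  simp [this]

lemma map_fTrunc_pow_char {R : Type*} [CommRing R] (p : ℕ) [Fact p.Prime] [CharP R p]
    (k N : ℕ) :
    map (Int.castRingHom R) (fTrunc k N) ^ p = map (Int.castRingHom R) (fTrunc (p * k) N) := by
  have : CharP R⟦X⟧ p := charP_of_injective_ringHom (C_injective (R := R)) p
  simp only [fTrunc, map_prod, map_sub, map_one, map_pow, map_X, ← Finset.prod_pow,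
    sub_pow_char, one_pow, ← pow_mul, mul_assoc, mul_comm p]

lemma map_mul_invOfUnit_eq_one {R S : Type*} [CommRing R] [CommRing S] (f : R →+* S)
    {a u : R⟦X⟧} (hu : constantCoeff u = 1) (h : map f a = map f u) :
    map f (a * invOfUnit u 1) = 1 := by
  rw [map_mul, h, ← map_mul, mul_invOfUnit u 1 (by simpa using hu), map_one]

theorem stmt0 (n : ℕ) (hn : 1 ≤ n) : bt n ≡ 0 [ZMOD 2] := by
  set φ := Int.castRingHom (ZMod 2)
  have h2 : map φ (fTrunc 2 n) = map φ (fTrunc 1 n) ^ 2 := (map_fTrunc_pow_char 2 1 n).symm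
  have h4 : map φ (fTrunc 4 n) = map φ (fTrunc 2 n) ^ 2 := (map_fTrunc_pow_char 2 2 n).symm
  have hcongr : map φ (fTrunc 4 n ^ 3) = map φ (fTrunc 1 n ^ 6 * fTrunc 2 n ^ 3) := by
    simp only [map_mul, map_pow, h4, h2]
    ring
  have hunit : constantCoeff (fTrunc 1 n ^ 6 * fTrunc 2 n ^ 3) = 1 := by
    simp [constantCoeff_fTrunc one_ne_zero, constantCoeff_fTrunc two_ne_zero]
  have hcast : (bt n : ZMod 2) = 0 := by
    rw [bt, ← eq_intCast φ, ← coeff_map, map_mul_invOfUnit_eq_one φ hunit hcongr,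
      coeff_one, if_neg (by omega)]
  exact (ZMod.intCast_eq_intCast_iff _ 0 2).mp (by simpa using hcast)
end

section
/- For all integers n ≥ 0 and α ≥ 0, bt(2^α (4n+3)) ≡ 0 (mod 4). -/
open PowerSeries

/-! Modulo 4 we have `(1 - q^s)^2 = (1 - q^{2s}) (1 + 2 q^s / (1 - q^s))`, so
`f_d^2 ≡ f_{2d} ψ_d` with `ψ_d = 1 + 2 Λ_d`, `Λ_d = ∑_j q^{dj} / (1 - q^{dj})`, and `ψ_d^2 ≡ 1`.
Hence `f_4^3 / (f_1^6 f_2^3) ≡ ψ_1 ψ_2 ≡ 1 + 2 Λ_1 + 2 Λ_2`. The coefficient of `q^m` in `Λ_d`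
counts the `j` with `d j ∣ m`; the involution `j ↦ m / (d j)` pairs them up, with a fixed point
only if `m = d j^2`. As `2^α (4n+3)` is neither a square nor twice a square, both counts are
even. -/

open Finset

lemma prod_one_add_two_mul {R ι : Type*} [CommRing R] (h4 : (4 : R) = 0) (s : Finset ι)
    (c : ι → R) : ∏ i ∈ s, (1 + 2 * c i) = 1 + 2 * ∑ i ∈ s, c i := by
  induction s using Finset.cons_induction with
  | empty => simp
  | cons a s ha ih =>
    rw [prod_cons, sum_cons, ih]
    linear_combination c a * (∑ i ∈ s, c i) * h4

lemma Finset.even_card_of_involution {α : Type*} {s : Finset α} (g : α → α)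
    (hg : ∀ a ∈ s, g a ∈ s) (hgg : ∀ a ∈ s, g (g a) = a) (hfix : ∀ a ∈ s, g a ≠ a) :
    Even #s := by
  rw [← ZMod.natCast_eq_zero_iff_even, card_eq_sum_ones, Nat.cast_sum]
  exact sum_involution (fun a _ => g a) (fun _ _ => by decide) (fun a ha _ => hfix a ha) hg hgg

lemma even_card_filter_mul_dvd {d m N : ℕ} (hd : 0 < d) (hm : 0 < m) (hmN : m ≤ N)
    (hsq : ∀ k, d * k ^ 2 ≠ m) : Even #{j ∈ Icc 1 N | d * j ∣ m} := by
  have cofactor : ∀ j ∈ {j ∈ Icc 1 N | d * j ∣ m}, m / (d * j) ∈ {j ∈ Icc 1 N | d * j ∣ m} ∧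
      m / (d * (m / (d * j))) = j ∧ m / (d * j) ≠ j := by
    intro j hj
    simp only [mem_filter, mem_Icc] at hj ⊢
    obtain ⟨⟨hj1, -⟩, t, rfl⟩ := hj
    have ht : 0 < t := Nat.pos_of_mul_pos_left hm
    rw [Nat.mul_div_cancel_left t (by positivity), show d * j * t = d * t * j by ring,
      Nat.mul_div_cancel_left j (by positivity)]
    refine ⟨⟨⟨ht, le_trans ?_ hmN⟩, Dvd.intro j rfl⟩, rfl, ?_⟩
    · exact Nat.le_mul_of_pos_left t (by positivity)
    · rintro rfl
      exact hsq t (by ring)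
  exact even_card_of_involution (fun j => m / (d * j)) (fun j hj => (cofactor j hj).1)
    (fun j hj => (cofactor j hj).2.1) (fun j hj => (cofactor j hj).2.2)

lemma two_pow_mul_sq_ne (j k α n : ℕ) : 2 ^ j * k ^ 2 ≠ 2 ^ α * (4 * n + 3) := by
  intro h
  have hk : k ≠ 0 := by rintro rfl; simp at h
  obtain ⟨β, u, hu, rfl⟩ := Nat.exists_eq_two_pow_mul_odd hk
  have hsplit : 2 ^ (j + 2 * β) * u ^ 2 = 2 ^ α * (4 * n + 3) := by rw [← h]; ring
  have hu2 : Odd (u ^ 2) := hu.pow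
  have hval := congrArg (padicValNat 2) hsplit
  rw [padicValNat.mul (by positivity) hu2.pos.ne', padicValNat.mul (by positivity) (by omega),
    padicValNat.prime_pow, padicValNat.prime_pow,
    padicValNat.eq_zero_of_not_dvd hu2.not_two_dvd_nat,
    padicValNat.eq_zero_of_not_dvd (by omega), add_zero, add_zero] at hval
  rw [hval] at hsplit
  have hsq := Nat.eq_of_mul_eq_mul_left (by positivity) hsplit
  obtain ⟨t, rfl⟩ := hu
  have : (2 * t + 1) ^ 2 = 4 * (t ^ 2 + t) + 1 := by ring
  omega

section

variable {R : Type*} [CommRing R]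

lemma four_eq_zero_powerSeries (h4 : (4 : R) = 0) : (4 : R⟦X⟧) = 0 := by
  rw [← map_ofNat C, h4, map_zero]

variable (R) in
noncomputable def eulerProd (k N : ℕ) : R⟦X⟧ :=
  ∏ i ∈ Icc 1 N, (1 - X ^ (k * i))

variable (R) in
/-- `q^s / (1 - q^s) = ∑_{t ≥ 1} q^{s t}`. -/
noncomputable def lambertTerm (s : ℕ) : R⟦X⟧ :=
  mk fun m => if 0 < m ∧ s ∣ m then 1 else 0

variable (R) in
noncomputable def lambertSum (d N : ℕ) : R⟦X⟧ :=
  ∑ j ∈ Icc 1 N, lambertTerm R (d * j)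

lemma map_eulerProd {S : Type*} [CommRing S] (f : R →+* S) (k N : ℕ) :
    (eulerProd R k N).map f = eulerProd S k N := by
  simp [eulerProd, map_prod]

lemma constantCoeff_eulerProd {k : ℕ} (hk : 0 < k) (N : ℕ) :
    constantCoeff (eulerProd R k N) = 1 := by
  rw [eulerProd, map_prod]
  refine prod_eq_one fun i hi => ?_
  have : k * i ≠ 0 := Nat.mul_ne_zero hk.ne' (by simp at hi; omega)
  simp [this]

lemma one_sub_X_pow_mul_lambertTerm {s : ℕ} (hs : 0 < s) :
    (1 - X ^ s) * lambertTerm R s = X ^ s := by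
  ext m
  rw [sub_mul, one_mul, map_sub, coeff_X_pow_mul', coeff_X_pow]
  simp only [lambertTerm, coeff_mk]
  rcases lt_trichotomy m s with hm | rfl | hm
  · have : ¬ (0 < m ∧ s ∣ m) := fun h => (Nat.not_dvd_of_pos_of_lt h.1 hm) h.2
    simp [this, hm.ne, hm.not_ge]
  · simp [hs]
  · simp [hm, hm.ne', hm.le, Nat.dvd_sub_self_right, hm.not_ge, hs.trans hm]

lemma one_sub_X_pow_sq (h4 : (4 : R) = 0) {s : ℕ} (hs : 0 < s) :
    (1 - X ^ s) ^ 2 = (1 - X ^ (2 * s)) * (1 + 2 * lambertTerm R s) := by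
  linear_combination (-2 * (1 + X ^ s)) * one_sub_X_pow_mul_lambertTerm (R := R) hs
    - X ^ s * four_eq_zero_powerSeries h4

lemma eulerProd_sq (h4 : (4 : R) = 0) {d : ℕ} (hd : 0 < d) (N : ℕ) :
    eulerProd R d N ^ 2 = eulerProd R (2 * d) N * (1 + 2 * lambertSum R d N) := by
  rw [lambertSum, ← prod_one_add_two_mul (four_eq_zero_powerSeries h4), eulerProd, eulerProd,
    ← prod_pow, ← prod_mul_distrib]
  refine prod_congr rfl fun i hi => ?_
  rw [mul_assoc, one_sub_X_pow_sq h4 (Nat.mul_pos hd (by simp at hi; omega))]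

lemma eulerProd_four_pow_three_mul (h4 : (4 : R) = 0) (N : ℕ) {J : R⟦X⟧}
    (hJ : eulerProd R 1 N ^ 6 * eulerProd R 2 N ^ 3 * J = 1) :
    eulerProd R 4 N ^ 3 * J = (1 + 2 * lambertSum R 1 N) * (1 + 2 * lambertSum R 2 N) := by
  set ψ₁ := 1 + 2 * lambertSum R 1 N
  set ψ₂ := 1 + 2 * lambertSum R 2 N
  have h₁ : eulerProd R 1 N ^ 2 = eulerProd R 2 N * ψ₁ := eulerProd_sq h4 one_pos N
  have h₂ : eulerProd R 2 N ^ 2 = eulerProd R 4 N * ψ₂ := eulerProd_sq h4 two_pos N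
  have hψ₁ : ψ₁ ^ 2 = 1 := by
    linear_combination (lambertSum R 1 N + lambertSum R 1 N ^ 2) * four_eq_zero_powerSeries h4
  have hψ₂ : ψ₂ ^ 2 = 1 := by
    linear_combination (lambertSum R 2 N + lambertSum R 2 N ^ 2) * four_eq_zero_powerSeries h4
  have hden : eulerProd R 1 N ^ 6 * eulerProd R 2 N ^ 3 = eulerProd R 4 N ^ 3 * ψ₁ ^ 3 * ψ₂ ^ 3 :=
    calc eulerProd R 1 N ^ 6 * eulerProd R 2 N ^ 3
        = (eulerProd R 1 N ^ 2) ^ 3 * eulerProd R 2 N ^ 3 := by ring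
      _ = (eulerProd R 2 N ^ 2) ^ 3 * ψ₁ ^ 3 := by rw [h₁]; ring
      _ = eulerProd R 4 N ^ 3 * ψ₁ ^ 3 * ψ₂ ^ 3 := by rw [h₂]; ring
  calc eulerProd R 4 N ^ 3 * J
      = eulerProd R 4 N ^ 3 * (ψ₁ ^ 2) ^ 2 * (ψ₂ ^ 2) ^ 2 * J := by rw [hψ₁, hψ₂]; ring
    _ = ψ₁ * ψ₂ * (eulerProd R 1 N ^ 6 * eulerProd R 2 N ^ 3 * J) := by rw [hden]; ring
    _ = ψ₁ * ψ₂ := by rw [hJ, mul_one]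

lemma coeff_lambertSum {m : ℕ} (hm : 0 < m) (d N : ℕ) :
    coeff m (lambertSum R d N) = #{j ∈ Icc 1 N | d * j ∣ m} := by
  simp [lambertSum, lambertTerm, hm, sum_boole]

lemma two_mul_coeff_lambertSum (h4 : (4 : R) = 0) {d m N : ℕ} (hd : 0 < d) (hm : 0 < m)
    (hmN : m ≤ N) (hsq : ∀ k, d * k ^ 2 ≠ m) : 2 * coeff m (lambertSum R d N) = 0 := by
  obtain ⟨r, hr⟩ := even_card_filter_mul_dvd hd hm hmN hsq
  rw [coeff_lambertSum hm, hr, Nat.cast_add]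
  linear_combination (r : R) * h4

end

lemma intCast_bt (N : ℕ) : (bt N : ZMod 4) =
    coeff N ((1 + 2 * lambertSum (ZMod 4) 1 N) * (1 + 2 * lambertSum (ZMod 4) 2 N)) := by
  set G := eulerProd ℤ 1 N ^ 6 * eulerProd ℤ 2 N ^ 3
  have hbt : bt N = coeff N (eulerProd ℤ 4 N ^ 3 * invOfUnit G 1) := rfl
  have hG : G * invOfUnit G 1 = 1 := mul_invOfUnit G 1 (by
    simp [G, constantCoeff_eulerProd one_pos, constantCoeff_eulerProd two_pos])
  have hJ := congrArg (map (Int.castRingHom (ZMod 4))) hG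
  simp only [G, map_mul, map_pow, map_eulerProd, map_one] at hJ
  rw [← eulerProd_four_pow_three_mul rfl N hJ, hbt, ← map_eulerProd (Int.castRingHom (ZMod 4)),
    ← map_pow, ← map_mul, coeff_map, eq_intCast]

theorem stmt12 (n α : ℕ) : bt (2 ^ α * (4 * n + 3)) ≡ 0 [ZMOD 4] := by
  set M := 2 ^ α * (4 * n + 3)
  have hM : 0 < M := by positivity
  have h4 : (4 : ZMod 4) = 0 := rfl
  have hexp : (1 + 2 * lambertSum (ZMod 4) 1 M) * (1 + 2 * lambertSum _ 2 M) =
      1 + C 2 * lambertSum _ 1 M + C 2 * lambertSum _ 2 M := by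
    rw [map_ofNat C 2]
    linear_combination lambertSum (ZMod 4) 1 M * lambertSum _ 2 M * four_eq_zero_powerSeries h4
  have h₁ : 2 * coeff M (lambertSum (ZMod 4) 1 M) = 0 :=
    two_mul_coeff_lambertSum h4 one_pos hM le_rfl fun k => by
      simpa using two_pow_mul_sq_ne 0 k α n
  have h₂ : 2 * coeff M (lambertSum (ZMod 4) 2 M) = 0 :=
    two_mul_coeff_lambertSum h4 two_pos hM le_rfl fun k => by
      simpa using two_pow_mul_sq_ne 1 k α n
  have hbt : (bt M : ZMod 4) = 0 := by
    rw [intCast_bt, hexp, map_add, map_add, coeff_one, if_neg hM.ne', coeff_C_mul, coeff_C_mul,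
      h₁, h₂, add_zero, add_zero]
  exact Int.modEq_zero_iff_dvd.mpr ((ZMod.intCast_zmod_eq_zero_iff_dvd _ 4).mp hbt)
end

section
/- For all integers n ≥ 0 and k ≥ 1, b_{2k+1}(n) ≡ ā(n) (mod 4), where b_m denotes the overcubic partition m-tuples function and ā = b_1 is the overcubic partition function. -/
/-! Modulo 4 one has `(1 - y)⁴ = (1 - y²)²`, hence `f₁⁴ ≡ f₂²` and `f₂⁴ ≡ f₄²`, so
`f₄² ≡ f₂⁴ ≡ (f₁² f₂)²`. Thus `G = f₄ / (f₁² f₂)`, the generating function of `ā`,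
satisfies `G² ≡ 1 (mod 4)`. Since `f₄ᵐ / (f₁^{2m} f₂ᵐ) = Gᵐ`, every odd power of `G` is
congruent to `G` modulo 4. -/

open PowerSeries

/-- `b m n` is the `n`-th coefficient of `f₄ᵐ / (f₁^{2m} f₂ᵐ)`, the number of
overcubic partition `m`-tuples of `n`. -/
noncomputable def b (m n : ℕ) : ℤ :=
  PowerSeries.coeff n
    ((fTrunc 4 n) ^ m * PowerSeries.invOfUnit ((fTrunc 1 n) ^ (2 * m) * (fTrunc 2 n) ^ m) 1)

noncomputable def overcubicTrunc (N : ℕ) : PowerSeries ℤ :=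
  fTrunc 4 N * invOfUnit (fTrunc 1 N ^ 2 * fTrunc 2 N) 1

lemma one_sub_pow_four_eq_sq {R : Type*} [CommRing R] (h4 : (4 : R) = 0) (y : R) :
    (1 - y) ^ 4 = (1 - y ^ 2) ^ 2 := by
  linear_combination (-y + 2 * y ^ 2 - y ^ 3) * h4

lemma map_fTrunc_pow_four {R : Type*} [CommRing R] (h4 : (4 : R) = 0) (k N : ℕ) :
    map (Int.castRingHom R) (fTrunc k N) ^ 4 =
      map (Int.castRingHom R) (fTrunc (2 * k) N) ^ 2 := by
  have h4' : (4 : PowerSeries R) = 0 := by rw [← map_ofNat (C (R := R)) 4, h4, map_zero]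
  simp only [fTrunc, map_prod, ← Finset.prod_pow]
  refine Finset.prod_congr rfl fun i _ => ?_
  simp only [map_sub, map_one, map_pow, map_X]
  rw [show 2 * k * i = k * i * 2 by ring, pow_mul _ (k * i) 2]
  exact one_sub_pow_four_eq_sq h4' _

lemma invOfUnit_pow {R : Type*} [CommRing R] {φ : PowerSeries R} (hφ : constantCoeff φ = 1)
    (m : ℕ) : invOfUnit (φ ^ m) 1 = invOfUnit φ 1 ^ m := by
  refine (left_inv_eq_right_inv (a := φ ^ m) ?_ ?_).symm
  · rw [← mul_pow, invOfUnit_mul φ 1 (by simpa using hφ), one_pow]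
  · exact mul_invOfUnit _ 1 (by simp [hφ])

lemma b_eq_coeff_overcubicTrunc_pow (m n : ℕ) : b m n = coeff n (overcubicTrunc n ^ m) := by
  have hD : constantCoeff (fTrunc 1 n ^ 2 * fTrunc 2 n) = 1 := by
    simp [constantCoeff_fTrunc]
  rw [b, overcubicTrunc, mul_pow, ← invOfUnit_pow hD, mul_pow, ← pow_mul, mul_comm 2 m]

lemma map_overcubicTrunc_sq {R : Type*} [CommRing R] (h4 : (4 : R) = 0) (N : ℕ) :
    map (Int.castRingHom R) (overcubicTrunc N) ^ 2 = 1 := by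
  set ρ := map (Int.castRingHom R)
  have h₁ : ρ (fTrunc 1 N) ^ 4 = ρ (fTrunc 2 N) ^ 2 := map_fTrunc_pow_four h4 1 N
  have h₂ : ρ (fTrunc 2 N) ^ 4 = ρ (fTrunc 4 N) ^ 2 := map_fTrunc_pow_four h4 2 N
  have hf₄ : ρ (fTrunc 4 N) ^ 2 = ρ (fTrunc 1 N ^ 2 * fTrunc 2 N) ^ 2 := by
    rw [map_mul, map_pow, ← h₂]
    linear_combination ρ (fTrunc 2 N) ^ 2 * h₁.symm
  have hinv : fTrunc 1 N ^ 2 * fTrunc 2 N * invOfUnit (fTrunc 1 N ^ 2 * fTrunc 2 N) 1 = 1 :=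
    mul_invOfUnit _ 1 (by simp [constantCoeff_fTrunc])
  rw [overcubicTrunc, map_mul, mul_pow, hf₄, ← mul_pow, ← map_mul, hinv, map_one, one_pow]

theorem stmt15_general (n k : ℕ) : b (2 * k + 1) n ≡ b 1 n [ZMOD 4] := by
  set ρ := map (Int.castRingHom (ZMod 4))
  have hcast (m : ℕ) : (b m n : ZMod 4) = coeff n (ρ (overcubicTrunc n) ^ m) := by
    rw [b_eq_coeff_overcubicTrunc_pow, ← map_pow, coeff_map, eq_intCast]
  have hsq : ρ (overcubicTrunc n) ^ 2 = 1 := map_overcubicTrunc_sq (by decide) n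
  refine (ZMod.intCast_eq_intCast_iff _ _ 4).mp ?_
  rw [hcast, hcast, pow_succ, pow_mul, hsq, one_pow, one_mul, pow_one]

theorem stmt15 (n k : ℕ) (hk : 1 ≤ k) : b (2 * k + 1) n ≡ b 1 n [ZMOD 4] :=
  stmt15_general n k
end
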